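/- Let R(E₈) = {±e_i ± e_j : 1 ≤ i < j ≤ 8} ∪ {(1/2)∑_{i=1}^{8} ε_i e_i : ε_i ∈ {±1}, ∏_{i=1}^{8} ε_i = 1} ⊂ ℝ⁸, and let R(E₆) = {α ∈ R(E₈) : ⟨α, e₆ + e₈⟩ = 0 and ⟨α, e₇ + e₈⟩ = 0}. Then the four vectors e₃ − e₂, (1/2)(e₁ + e₂ + e₃ + e₄ + e₅ − e₆ − e₇ + e₈), (1/2)(−e₁ − e₂ − e₃ − e₄ + e₅ − e₆ − e₇ + e₈), and e₄ − e₁ all belong to R(E₆) and form a strongly orthogonal subset of R(E₆) with 4 elements. -/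

import Mathlib

open RealInnerProductSpace

/-- A subset `S` of a set `R` of vectors is *strongly orthogonal* (relative to
`R`) if `S ⊆ R` and for all distinct `α, β ∈ S` one has `α ≠ -β`,
`α + β ∉ R` and `α - β ∉ R`. -/
def IsStronglyOrthSubset {V : Type*} [AddCommGroup V] (R S : Set V) : Prop :=
  S ⊆ R ∧ S.Pairwise fun α β => α ≠ -β ∧ α + β ∉ R ∧ α - β ∉ R

/-- The `i`-th standard basis vector of `ℝⁿ`, in 1-based indexing. -/
noncomputable def stdVec (n : ℕ) (i : ℕ) : EuclideanSpace ℝ (Fin n) :=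
  (WithLp.equiv 2 (Fin n → ℝ)).symm fun j => if (j : ℕ) + 1 = i then 1 else 0

/-- The root system of type `E₈` in `ℝ⁸`. -/
noncomputable def rootsE8 : Set (EuclideanSpace ℝ (Fin 8)) :=
  {x | ∃ i j : ℕ, 1 ≤ i ∧ i < j ∧ j ≤ 8 ∧
      (x = stdVec 8 i + stdVec 8 j ∨ x = stdVec 8 i - stdVec 8 j ∨
       x = -stdVec 8 i + stdVec 8 j ∨ x = -stdVec 8 i - stdVec 8 j)} ∪
  {x | (∀ i : Fin 8, x i = 1 / 2 ∨ x i = -(1 / 2)) ∧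
      Even (Finset.univ.filter fun i : Fin 8 => x i = -(1 / 2)).card}

/-- The root system of type `E₆`, realized inside `R(E₈)` as the roots
orthogonal to both `e₆ + e₈` and `e₇ + e₈`. -/
noncomputable def rootsE6 : Set (EuclideanSpace ℝ (Fin 8)) :=
  {α ∈ rootsE8 | ⟪α, stdVec 8 6 + stdVec 8 8⟫ = 0 ∧
    ⟪α, stdVec 8 7 + stdVec 8 8⟫ = 0}
/-!
Every root of `E₈` has squared length `2`, and the four given vectors are mutually orthogonal.
For orthogonal roots `α, β` the vectors `α ± β` have squared length `4`, so they are not roots,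
and `α = -β` is impossible since `⟪α, α⟫ ≠ 0`; for the same reason the four vectors are
distinct. Membership in `R(E₆)` is a coordinate check.
-/

section StronglyOrthogonal

variable {V : Type*} [NormedAddCommGroup V] [InnerProductSpace ℝ V]

theorem ne_of_inner_eq_zero {x y : V} (hx : x ≠ 0) (h : ⟪x, y⟫ = 0) : x ≠ y := by
  rintro rfl
  exact hx (inner_self_eq_zero.mp h)

theorem isStronglyOrthSubset_of_pairwise_inner_eq_zero {R S : Set V} {c : ℝ} (hc : c ≠ 0)
    (hR : ∀ x ∈ R, ‖x‖ ^ 2 = c) (hSR : S ⊆ R) (hS : S.Pairwise fun α β => ⟪α, β⟫ = 0) :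
    IsStronglyOrthSubset R S := by
  refine ⟨hSR, fun α hα β hβ hne => ⟨?_, ?_, ?_⟩⟩
  · rintro rfl
    have hβ0 : ⟪-β, β⟫ = 0 := hS hα hβ hne
    rw [inner_neg_left, real_inner_self_eq_norm_sq, hR β (hSR hβ), neg_eq_zero] at hβ0
    exact hc hβ0
  · intro hsum
    have h := hR _ hsum
    rw [norm_add_sq_real, hS hα hβ hne, hR α (hSR hα), hR β (hSR hβ)] at h
    exact hc (by linarith)
  · intro hdiff
    have h := hR _ hdiff
    rw [norm_sub_sq_real, hS hα hβ hne, hR α (hSR hα), hR β (hSR hβ)] at h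
    exact hc (by linarith)

end StronglyOrthogonal

theorem stdVec_apply (n i : ℕ) (j : Fin n) :
    stdVec n i j = if (j : ℕ) + 1 = i then 1 else 0 :=
  rfl

theorem stdVec_eq_single {n i : ℕ} (h₁ : 1 ≤ i) (h₂ : i ≤ n) :
    stdVec n i = PiLp.single 2 (⟨i - 1, by omega⟩ : Fin n) (1 : ℝ) := by
  ext j
  simp only [stdVec_apply, PiLp.single_apply, Fin.ext_iff]
  congr 1
  exact propext ⟨by omega, by omega⟩

theorem norm_stdVec {n i : ℕ} (h₁ : 1 ≤ i) (h₂ : i ≤ n) : ‖stdVec n i‖ = 1 := by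
  rw [stdVec_eq_single h₁ h₂, PiLp.norm_single, norm_one]

theorem inner_stdVec_of_ne {n i j : ℕ} (hij : i ≠ j) : ⟪stdVec n i, stdVec n j⟫ = 0 := by
  simp only [PiLp.inner_apply, stdVec_apply, RCLike.inner_apply, conj_trivial]
  refine Finset.sum_eq_zero fun k _ => ?_
  split_ifs <;> first | omega | simp

theorem norm_sq_of_mem_rootsE8 {x : EuclideanSpace ℝ (Fin 8)} (hx : x ∈ rootsE8) :
    ‖x‖ ^ 2 = 2 := by
  rcases hx with ⟨i, j, hi, hij, hj, hx⟩ | ⟨hx, -⟩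
  · have hperp : ⟪stdVec 8 i, stdVec 8 j⟫ = 0 := inner_stdVec_of_ne hij.ne
    have hsum : ‖stdVec 8 i + stdVec 8 j‖ ^ 2 = 2 := by
      rw [norm_add_sq_real, hperp, norm_stdVec hi (by omega),
        norm_stdVec (by omega) hj]
      norm_num
    have hdiff : ‖stdVec 8 i - stdVec 8 j‖ ^ 2 = 2 := by
      rw [norm_sub_sq_real, hperp, norm_stdVec hi (by omega),
        norm_stdVec (by omega) hj]
      norm_num
    rcases hx with rfl | rfl | rfl | rfl
    · exact hsum
    · exact hdiff
    · rwa [neg_add_eq_sub, norm_sub_rev]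
    · rwa [← neg_add', norm_neg]
  · rw [EuclideanSpace.real_norm_sq_eq, Finset.sum_congr rfl fun k _ => (?_ : x k ^ 2 = 1 / 4)]
    · norm_num
    · rcases hx k with h | h <;> rw [h] <;> norm_num

theorem ne_zero_of_mem_rootsE8 {x : EuclideanSpace ℝ (Fin 8)} (hx : x ∈ rootsE8) : x ≠ 0 := by
  rintro rfl
  simpa using norm_sq_of_mem_rootsE8 hx

/-- The vector `(1/2) ∑ εᵢ eᵢ` with `εᵢ = -1` exactly for `i ∈ s`; indices in `Fin 8` are
0-based, so `i` stands for `e_{i+1}`. -/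
noncomputable def halfSignVec (s : Finset (Fin 8)) : EuclideanSpace ℝ (Fin 8) :=
  WithLp.toLp 2 fun i => if i ∈ s then -(1 / 2) else 1 / 2

theorem halfSignVec_mem_rootsE8 {s : Finset (Fin 8)} (hs : Even s.card) :
    halfSignVec s ∈ rootsE8 := by
  refine Or.inr ⟨fun i => ?_, ?_⟩
  · by_cases hi : i ∈ s <;> simp [halfSignVec, hi]
  · convert hs
    ext i
    by_cases hi : i ∈ s <;> norm_num [halfSignVec, hi]

namespace TypeEII

noncomputable def α₄ : EuclideanSpace ℝ (Fin 8) := stdVec 8 3 - stdVec 8 2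

noncomputable def γ₁ : EuclideanSpace ℝ (Fin 8) :=
  (1 / 2 : ℝ) • (stdVec 8 1 + stdVec 8 2 + stdVec 8 3 + stdVec 8 4 +
    stdVec 8 5 - stdVec 8 6 - stdVec 8 7 + stdVec 8 8)

noncomputable def γ₂ : EuclideanSpace ℝ (Fin 8) :=
  (1 / 2 : ℝ) • (-stdVec 8 1 - stdVec 8 2 - stdVec 8 3 - stdVec 8 4 +
    stdVec 8 5 - stdVec 8 6 - stdVec 8 7 + stdVec 8 8)

noncomputable def γ₃ : EuclideanSpace ℝ (Fin 8) := stdVec 8 4 - stdVec 8 1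

theorem α₄_mem_rootsE6 : α₄ ∈ rootsE6 := by
  refine ⟨Or.inl ⟨2, 3, by norm_num, by norm_num, by norm_num,
    Or.inr (Or.inr (Or.inl ?_))⟩, ?_, ?_⟩
  · rw [α₄, neg_add_eq_sub]
  all_goals simp [α₄, PiLp.inner_apply, Fin.sum_univ_eight, stdVec_apply]

theorem γ₁_mem_rootsE6 : γ₁ ∈ rootsE6 := by
  refine ⟨?_, ?_, ?_⟩
  · have h : γ₁ = halfSignVec {5, 6} := by
      ext i
      fin_cases i <;> simp [γ₁, halfSignVec, stdVec_apply]
    exact h ▸ halfSignVec_mem_rootsE8 (by decide)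
  all_goals simp [γ₁, PiLp.inner_apply, Fin.sum_univ_eight, stdVec_apply]

theorem γ₂_mem_rootsE6 : γ₂ ∈ rootsE6 := by
  refine ⟨?_, ?_, ?_⟩
  · have h : γ₂ = halfSignVec {0, 1, 2, 3, 5, 6} := by
      ext i
      fin_cases i <;> simp [γ₂, halfSignVec, stdVec_apply]
    exact h ▸ halfSignVec_mem_rootsE8 (by decide)
  all_goals simp [γ₂, PiLp.inner_apply, Fin.sum_univ_eight, stdVec_apply]

theorem γ₃_mem_rootsE6 : γ₃ ∈ rootsE6 := by
  refine ⟨Or.inl ⟨1, 4, le_rfl, by norm_num, by norm_num,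
    Or.inr (Or.inr (Or.inl ?_))⟩, ?_, ?_⟩
  · rw [γ₃, neg_add_eq_sub]
  all_goals simp [γ₃, PiLp.inner_apply, Fin.sum_univ_eight, stdVec_apply]

theorem inner_pairs_eq_zero :
    ⟪α₄, γ₁⟫ = 0 ∧ ⟪α₄, γ₂⟫ = 0 ∧ ⟪α₄, γ₃⟫ = 0 ∧
    ⟪γ₁, γ₂⟫ = 0 ∧ ⟪γ₁, γ₃⟫ = 0 ∧ ⟪γ₂, γ₃⟫ = 0 := by
  refine ⟨?_, ?_, ?_, ?_, ?_, ?_⟩ <;>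
    simp [α₄, γ₁, γ₂, γ₃, PiLp.inner_apply, Fin.sum_univ_eight, stdVec_apply]

noncomputable def Γ : Set (EuclideanSpace ℝ (Fin 8)) := {α₄, γ₁, γ₂, γ₃}

theorem Γ_subset_rootsE6 : Γ ⊆ rootsE6 := by
  simp only [Γ, Set.insert_subset_iff, Set.singleton_subset_iff]
  exact ⟨α₄_mem_rootsE6, γ₁_mem_rootsE6, γ₂_mem_rootsE6, γ₃_mem_rootsE6⟩

theorem Γ_pairwise_inner_eq_zero : Γ.Pairwise fun α β => ⟪α, β⟫ = 0 := by
  obtain ⟨h₁₂, h₁₃, h₁₄, h₂₃, h₂₄, h₃₄⟩ := inner_pairs_eq_zero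
  simp [Γ, Set.pairwise_insert, inner_eq_zero_symm, *]

theorem isStronglyOrthSubset_Γ : IsStronglyOrthSubset rootsE6 Γ :=
  isStronglyOrthSubset_of_pairwise_inner_eq_zero two_ne_zero
    (fun _ hx => norm_sq_of_mem_rootsE8 hx.1) Γ_subset_rootsE6 Γ_pairwise_inner_eq_zero

theorem ncard_Γ : Γ.ncard = 4 := by
  obtain ⟨h₁₂, h₁₃, h₁₄, h₂₃, h₂₄, h₃₄⟩ := inner_pairs_eq_zero
  have hα₄ := ne_zero_of_mem_rootsE8 α₄_mem_rootsE6.1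
  have hγ₁ := ne_zero_of_mem_rootsE8 γ₁_mem_rootsE6.1
  have hγ₂ := ne_zero_of_mem_rootsE8 γ₂_mem_rootsE6.1
  exact Set.ncard_eq_four.mpr ⟨α₄, γ₁, γ₂, γ₃, ne_of_inner_eq_zero hα₄ h₁₂,
    ne_of_inner_eq_zero hα₄ h₁₃, ne_of_inner_eq_zero hα₄ h₁₄, ne_of_inner_eq_zero hγ₁ h₂₃,
    ne_of_inner_eq_zero hγ₁ h₂₄, ne_of_inner_eq_zero hγ₂ h₃₄, rfl⟩

end TypeEII

/-- the four vectors `e₃ − e₂`,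
`(1/2)(e₁+e₂+e₃+e₄+e₅−e₆−e₇+e₈)`, `(1/2)(−e₁−e₂−e₃−e₄+e₅−e₆−e₇+e₈)` and
`e₄ − e₁` all belong to `R(E₆)` and form a strongly orthogonal subset of
`R(E₆)` with `4` elements. -/
theorem typeEII_strongly_orthogonal_system :
    stdVec 8 3 - stdVec 8 2 ∈ rootsE6 ∧
    (1 / 2 : ℝ) • (stdVec 8 1 + stdVec 8 2 + stdVec 8 3 + stdVec 8 4 +
      stdVec 8 5 - stdVec 8 6 - stdVec 8 7 + stdVec 8 8) ∈ rootsE6 ∧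
    (1 / 2 : ℝ) • (-stdVec 8 1 - stdVec 8 2 - stdVec 8 3 - stdVec 8 4 +
      stdVec 8 5 - stdVec 8 6 - stdVec 8 7 + stdVec 8 8) ∈ rootsE6 ∧
    stdVec 8 4 - stdVec 8 1 ∈ rootsE6 ∧
    IsStronglyOrthSubset rootsE6
      {stdVec 8 3 - stdVec 8 2,
       (1 / 2 : ℝ) • (stdVec 8 1 + stdVec 8 2 + stdVec 8 3 + stdVec 8 4 +
         stdVec 8 5 - stdVec 8 6 - stdVec 8 7 + stdVec 8 8),
       (1 / 2 : ℝ) • (-stdVec 8 1 - stdVec 8 2 - stdVec 8 3 - stdVec 8 4 +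
         stdVec 8 5 - stdVec 8 6 - stdVec 8 7 + stdVec 8 8),
       stdVec 8 4 - stdVec 8 1} ∧
    ({stdVec 8 3 - stdVec 8 2,
      (1 / 2 : ℝ) • (stdVec 8 1 + stdVec 8 2 + stdVec 8 3 + stdVec 8 4 +
        stdVec 8 5 - stdVec 8 6 - stdVec 8 7 + stdVec 8 8),
      (1 / 2 : ℝ) • (-stdVec 8 1 - stdVec 8 2 - stdVec 8 3 - stdVec 8 4 +
        stdVec 8 5 - stdVec 8 6 - stdVec 8 7 + stdVec 8 8),
      stdVec 8 4 - stdVec 8 1} : Set (EuclideanSpace ℝ (Fin 8))).ncard = 4 :=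
  ⟨TypeEII.α₄_mem_rootsE6, TypeEII.γ₁_mem_rootsE6, TypeEII.γ₂_mem_rootsE6,
    TypeEII.γ₃_mem_rootsE6, TypeEII.isStronglyOrthSubset_Γ, TypeEII.ncard_Γ⟩
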